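/- Fix N ∈ ℕ and μ > 0, and let f, g : ℝ^{2N+2} → ℝ ∪ {∞} be the worst-case pair constructed with x₀ = 0, u₀ = 0: f(x) = δ_{D_t}(x) and g(x) = (μ/2)‖x‖² + δ_{C_t}(x) with t = Σ_{i=0}^{2N} t⋆_i e_i. If a trajectory ({(z̃_i, δ_i, γ_i)}_{i=0}^{2N−1}, x̃_N) is prox-prox zero-respecting with respect to (f, g), then it satisfies the proximal span condition with initial pair (0, 0): z̃_i ∈ span{d̃₀, …, d̃_{i−1}} for i = 0,…,2N−1 and x̃_N ∈ span{d̃₀, …, d̃_{2N−1}}, where d̃_i = z̃_i − prox_{γ_i f}(z̃_i) if δ_i = 0 and d̃_i = z̃_i − prox_{γ_i g}(z̃_i) if δ_i = 1. -/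

import Mathlib

noncomputable section

open scoped RealInnerProductSpace
open Finset

variable {E : Type*} [NormedAddCommGroup E] [InnerProductSpace ℝ E]

/-- An extended-real-valued function is proper: never `⊥` and finite somewhere. -/
def ProperFn (f : E → EReal) : Prop :=
  (∀ x, f x ≠ ⊥) ∧ ∃ x, f x ≠ ⊤

/-- An extended-real-valued function is closed: its epigraph is closed. -/
def ClosedFn (f : E → EReal) : Prop :=
  IsClosed {p : E × ℝ | f p.1 ≤ (p.2 : EReal)}

/-- Convexity for extended-real-valued functions. -/
def ConvexFn (f : E → EReal) : Prop :=
  ∀ x y : E, ∀ a b : ℝ, 0 ≤ a → 0 ≤ b → a + b = 1 →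
    f (a • x + b • y) ≤ (a : EReal) * f x + (b : EReal) * f y

/-- `g` is `μ`-strongly convex iff `g - (μ/2)‖·‖²` is convex. -/
def StrongConvexFn (μ : ℝ) (g : E → EReal) : Prop :=
  ConvexFn (fun x => g x - (((μ / 2) * ‖x‖ ^ 2 : ℝ) : EReal))

/-- `v` is a subgradient of `f` at `x`. -/
def SubdiffAt (f : E → EReal) (x v : E) : Prop :=
  ∀ y, f x + ((⟪v, y - x⟫ : ℝ) : EReal) ≤ f y

/-- `p` is a proximal point of `f` with stepsize `γ` at `x`, i.e. `p` minimizes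
`z ↦ f z + (1/(2γ))‖z - x‖²`. For closed proper convex `f` and `γ > 0` this
point is unique, i.e. `p = prox_{γ f}(x)`. -/
def IsProx (γ : ℝ) (f : E → EReal) (x p : E) : Prop :=
  ∀ z, f p + ((1 / (2 * γ) * ‖p - x‖ ^ 2 : ℝ) : EReal)
      ≤ f z + ((1 / (2 * γ) * ‖z - x‖ ^ 2 : ℝ) : EReal)

open Classical in
/-- Indicator function of a set, as an extended-real-valued function. -/
def indE (S : Set E) (x : E) : EReal := if x ∈ S then 0 else ⊤

/-- `p` is the (a) Euclidean projection of `x` onto `S`. -/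
def IsProj (S : Set E) (x p : E) : Prop :=
  p ∈ S ∧ ∀ q ∈ S, ‖p - x‖ ≤ ‖q - x‖

/-- Normal cone of the set `S` at `z`. -/
def NormalCone (S : Set E) (z : E) : Set E :=
  {v | ∀ w ∈ S, ⟪v, w - z⟫ ≤ 0}

/-- The set `C_t` of the worst-case construction.  Here `e 0` plays the role of the
paper's `e₋₁` and `e (i+1)` plays the role of the paper's `eᵢ`, so the paper's
coordinate `y_i = ⟨y, e_i⟩` is `⟪y, e (i+1)⟫`. -/
def Cset (N : ℕ) (e : ℕ → E) (t : ℕ → ℝ) : Set E :=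
  {y | ⟪y, e 0⟫ = 0 ∧ ⟪y, e 1⟫ = t 0 ∧
    ∀ k, 1 ≤ k → k ≤ N →
      (⟪y, e (2 * k)⟫, ⟪y, e (2 * k + 1)⟫)
        ∈ segment ℝ (0 : ℝ × ℝ) (t (2 * k - 1), t (2 * k))}

/-- The set `D_t` of the worst-case construction (same index convention as `Cset`). -/
def Dset (N : ℕ) (e : ℕ → E) (t : ℕ → ℝ) : Set E :=
  {y | ⟪y, e 0⟫ = 0 ∧
    ∀ k < N,
      (⟪y, e (2 * k + 1)⟫, ⟪y, e (2 * k + 2)⟫)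
        ∈ segment ℝ (0 : ℝ × ℝ) (t (2 * k), t (2 * k + 1))}


section AuxLemmas

lemma inner_ortho {n : ℕ} {e : ℕ → E} (he : Orthonormal ℝ (fun i : Fin n => e i))
    {a b : ℕ} (ha : a < n) (hb : b < n) :
    ⟪e a, e b⟫ = if a = b then 1 else 0 := by
  have := orthonormal_iff_ite.mp he ⟨a, ha⟩ ⟨b, hb⟩
  simpa [Fin.ext_iff] using this

lemma inner_pert_eq {n : ℕ} {e : ℕ → E} (he : Orthonormal ℝ (fun i : Fin n => e i))
    {a b j : ℕ} (ha : a < n) (hb : b < n) (hj : j < n) (p : E) (ca cb : ℝ) :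
    ⟪p - ca • e a - cb • e b, e j⟫
      = ⟪p, e j⟫ - (if a = j then ca else 0) - (if b = j then cb else 0) := by
  rw [inner_sub_left, inner_sub_left, real_inner_smul_left, real_inner_smul_left,
    inner_ortho he ha hj, inner_ortho he hb hj]
  split_ifs <;> ring

lemma inner_pert1_eq {n : ℕ} {e : ℕ → E} (he : Orthonormal ℝ (fun i : Fin n => e i))
    {a j : ℕ} (ha : a < n) (hj : j < n) (p : E) (ca : ℝ) :
    ⟪p - ca • e a, e j⟫ = ⟪p, e j⟫ - (if a = j then ca else 0) := by
  rw [inner_sub_left, real_inner_smul_left, inner_ortho he ha hj]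
  split_ifs <;> ring

lemma norm_pert2 {u v : E} (huv : ⟪u, v⟫ = 0) (hu : ‖u‖ = 1) (hv : ‖v‖ = 1) (w : E) :
    ‖w - ⟪w, u⟫ • u - ⟪w, v⟫ • v‖ ^ 2 = ‖w‖ ^ 2 - ⟪w, u⟫ ^ 2 - ⟪w, v⟫ ^ 2 := by
  have h1 : w - ⟪w, u⟫ • u - ⟪w, v⟫ • v = w - (⟪w, u⟫ • u + ⟪w, v⟫ • v) := by abel
  rw [h1, norm_sub_sq_real]
  have h2 : ⟪w, ⟪w, u⟫ • u + ⟪w, v⟫ • v⟫ = ⟪w, u⟫ ^ 2 + ⟪w, v⟫ ^ 2 := by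
    rw [inner_add_right, real_inner_smul_right, real_inner_smul_right]; ring
  have h3 : ‖⟪w, u⟫ • u + ⟪w, v⟫ • v‖ ^ 2 = ⟪w, u⟫ ^ 2 + ⟪w, v⟫ ^ 2 := by
    rw [norm_add_sq_real, norm_smul, norm_smul, real_inner_smul_left, real_inner_smul_right,
      huv, hu, hv]
    simp [mul_pow, sq_abs]
  rw [h2, h3]; ring

lemma norm_pert1 {u : E} (hu : ‖u‖ = 1) (w : E) :
    ‖w - ⟪w, u⟫ • u‖ ^ 2 = ‖w‖ ^ 2 - ⟪w, u⟫ ^ 2 := by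
  rw [norm_sub_sq_real, real_inner_smul_right, norm_smul, hu, mul_one, Real.norm_eq_abs,
    sq_abs]
  ring

lemma mem_of_isProx_ind {S : Set E} {γ : ℝ} {z p : E} (q : E) (hq : q ∈ S)
    (hp : IsProx γ (fun x => indE S x) z p) : p ∈ S := by
  by_contra h
  have h1 := hp q
  simp only [indE, if_pos hq, if_neg h, zero_add, EReal.top_add_coe] at h1
  exact EReal.coe_ne_top _ (top_le_iff.mp h1)

lemma real_ineq_of_isProx_ind {S : Set E} {γ : ℝ} {z p : E} (q : E) (hq : q ∈ S)
    (hpS : p ∈ S) (hp : IsProx γ (fun x => indE S x) z p) :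
    1 / (2 * γ) * ‖p - z‖ ^ 2 ≤ 1 / (2 * γ) * ‖q - z‖ ^ 2 := by
  have h1 := hp q
  simp only [indE, if_pos hq, if_pos hpS, zero_add] at h1
  exact_mod_cast h1

-- 0 ∈ Dset
lemma zero_mem_Dset (N : ℕ) (e : ℕ → E) (ts : ℕ → ℝ) : (0 : E) ∈ Dset N e ts := by
  refine ⟨inner_zero_left _, fun k _ => ?_⟩
  simp only [inner_zero_left]
  exact left_mem_segment ℝ (0 : ℝ × ℝ) _

lemma Dset_proj_mem {N : ℕ} {e : ℕ → E} {ts : ℕ → ℝ} {γ : ℝ} {z p : E}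
    (hp : IsProx γ (fun x => indE (Dset N e ts) x) z p) : p ∈ Dset N e ts :=
  mem_of_isProx_ind _ (zero_mem_Dset N e ts) hp

lemma Dset_pair_zero {N : ℕ} {e : ℕ → E} (he : Orthonormal ℝ (fun i : Fin (2*N+2) => e i))
    {ts : ℕ → ℝ} {γ : ℝ} (hγ : 0 < γ) {z p : E}
    (hp : IsProx γ (fun x => indE (Dset N e ts) x) z p)
    {k : ℕ} (hk : k < N) (hz1 : ⟪z, e (2*k+1)⟫ = 0) (hz2 : ⟪z, e (2*k+2)⟫ = 0) :
    ⟪p, e (2*k+1)⟫ = 0 ∧ ⟪p, e (2*k+2)⟫ = 0 := by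
  have hpS := Dset_proj_mem hp
  have ha : 2*k+1 < 2*N+2 := by omega
  have hb : 2*k+2 < 2*N+2 := by omega
  set ca := ⟪p, e (2*k+1)⟫ with hca
  set cb := ⟪p, e (2*k+2)⟫ with hcb
  set q := p - ca • e (2*k+1) - cb • e (2*k+2) with hqdef
  have hqS : q ∈ Dset N e ts := by
    refine ⟨?_, fun k' hk' => ?_⟩
    · rw [hqdef, inner_pert_eq he ha hb (by omega), if_neg (by omega), if_neg (by omega)]
      simpa using hpS.1
    · by_cases hkk : k' = k
      · subst hkk
        rw [hqdef, inner_pert_eq he ha hb (by omega), inner_pert_eq he ha hb (by omega),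
          if_pos rfl, if_neg (by omega), if_neg (by omega), if_pos rfl]
        simp only [sub_zero, sub_self, zero_sub]
        convert left_mem_segment ℝ (0 : ℝ × ℝ) (ts (2*k'), ts (2*k'+1)) using 2 <;> simp [hca, hcb]
      · have e1 : ⟪q, e (2*k'+1)⟫ = ⟪p, e (2*k'+1)⟫ := by
          rw [hqdef, inner_pert_eq he ha hb (by omega), if_neg (by omega), if_neg (by omega)]
          ring
        have e2 : ⟪q, e (2*k'+2)⟫ = ⟪p, e (2*k'+2)⟫ := by
          rw [hqdef, inner_pert_eq he ha hb (by omega), if_neg (by omega), if_neg (by omega)]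
          ring
        rw [e1, e2]
        exact hpS.2 k' hk'
  have hineq := real_ineq_of_isProx_ind q hqS hpS hp
  have hca' : ca = ⟪p - z, e (2*k+1)⟫ := by rw [inner_sub_left, hz1, sub_zero]
  have hcb' : cb = ⟪p - z, e (2*k+2)⟫ := by rw [inner_sub_left, hz2, sub_zero]
  have hqz : q - z = (p - z) - ⟪p - z, e (2*k+1)⟫ • e (2*k+1)
      - ⟪p - z, e (2*k+2)⟫ • e (2*k+2) := by
    rw [hqdef, ← hca', ← hcb']; abel
  have huv : ⟪e (2*k+1), e (2*k+2)⟫ = 0 := by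
    rw [inner_ortho he ha hb, if_neg (by omega)]
  have hnu : ‖e (2*k+1)‖ = 1 := he.1 ⟨2*k+1, ha⟩
  have hnv : ‖e (2*k+2)‖ = 1 := he.1 ⟨2*k+2, hb⟩
  have hnorm : ‖q - z‖ ^ 2 = ‖p - z‖ ^ 2 - ca ^ 2 - cb ^ 2 := by
    rw [hqz, norm_pert2 huv hnu hnv, ← hca', ← hcb']
  have hcpos : 0 < 1 / (2 * γ) := by positivity
  rw [hnorm] at hineq
  have h3 : ca ^ 2 + cb ^ 2 ≤ 0 := by
    have := (mul_le_mul_iff_right₀ hcpos).mp hineq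
    linarith
  have h4 : ca ^ 2 = 0 := le_antisymm (by nlinarith [sq_nonneg cb]) (sq_nonneg ca)
  have h5 : cb ^ 2 = 0 := le_antisymm (by nlinarith [sq_nonneg ca]) (sq_nonneg cb)
  exact ⟨pow_eq_zero_iff two_ne_zero |>.mp h4, pow_eq_zero_iff two_ne_zero |>.mp h5⟩

lemma Dset_free_coord {N : ℕ} {e : ℕ → E} (he : Orthonormal ℝ (fun i : Fin (2*N+2) => e i))
    {ts : ℕ → ℝ} {γ : ℝ} (hγ : 0 < γ) {z p : E}
    (hp : IsProx γ (fun x => indE (Dset N e ts) x) z p) :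
    ⟪p - z, e (2*N+1)⟫ = 0 := by
  have hpS := Dset_proj_mem hp
  have ha : 2*N+1 < 2*N+2 := by omega
  set c := ⟪p - z, e (2*N+1)⟫ with hc
  set q := p - c • e (2*N+1) with hqdef
  have hqS : q ∈ Dset N e ts := by
    refine ⟨?_, fun k' hk' => ?_⟩
    · rw [hqdef, inner_pert1_eq he ha (by omega), if_neg (by omega)]
      simpa using hpS.1
    · have e1 : ⟪q, e (2*k'+1)⟫ = ⟪p, e (2*k'+1)⟫ := by
        rw [hqdef, inner_pert1_eq he ha (by omega), if_neg (by omega)]; ring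
      have e2 : ⟪q, e (2*k'+2)⟫ = ⟪p, e (2*k'+2)⟫ := by
        rw [hqdef, inner_pert1_eq he ha (by omega), if_neg (by omega)]; ring
      rw [e1, e2]
      exact hpS.2 k' hk'
  have hineq := real_ineq_of_isProx_ind q hqS hpS hp
  have hqz : q - z = (p - z) - c • e (2*N+1) := by rw [hqdef]; abel
  have hnu : ‖e (2*N+1)‖ = 1 := he.1 ⟨2*N+1, ha⟩
  have hnorm : ‖q - z‖ ^ 2 = ‖p - z‖ ^ 2 - c ^ 2 := by
    rw [hqz, hc, norm_pert1 hnu]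
  have hcpos : 0 < 1 / (2 * γ) := by positivity
  rw [hnorm] at hineq
  have h3 : c ^ 2 ≤ 0 := by
    have := (mul_le_mul_iff_right₀ hcpos).mp hineq
    linarith
  exact pow_eq_zero_iff two_ne_zero |>.mp (le_antisymm h3 (sq_nonneg c))

lemma mem_of_isProx_g {S : Set E} {μ γ : ℝ} {z p : E} (q : E) (hq : q ∈ S)
    (hp : IsProx γ (fun x => (((μ / 2) * ‖x‖ ^ 2 : ℝ) : EReal) + indE S x) z p) : p ∈ S := by
  by_contra h
  have h1 := hp q
  simp only [indE, if_pos hq, if_neg h, add_zero, ← EReal.coe_add] at h1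
  have h2 : (((μ / 2) * ‖p‖ ^ 2 : ℝ) : EReal) + ⊤ + ((1 / (2 * γ) * ‖p - z‖ ^ 2 : ℝ) : EReal) = ⊤ := by
    rw [EReal.add_top_of_ne_bot (EReal.coe_ne_bot _), EReal.top_add_coe]
  rw [h2] at h1
  exact EReal.coe_ne_top _ (top_le_iff.mp h1)

lemma real_ineq_of_isProx_g {S : Set E} {μ γ : ℝ} {z p : E} (q : E) (hq : q ∈ S)
    (hpS : p ∈ S)
    (hp : IsProx γ (fun x => (((μ / 2) * ‖x‖ ^ 2 : ℝ) : EReal) + indE S x) z p) :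
    (μ / 2) * ‖p‖ ^ 2 + 1 / (2 * γ) * ‖p - z‖ ^ 2
      ≤ (μ / 2) * ‖q‖ ^ 2 + 1 / (2 * γ) * ‖q - z‖ ^ 2 := by
  have h1 := hp q
  simp only [indE, if_pos hq, if_pos hpS, add_zero, ← EReal.coe_add] at h1
  exact_mod_cast h1

lemma base_mem_Cset {N : ℕ} {e : ℕ → E} (he : Orthonormal ℝ (fun i : Fin (2*N+2) => e i))
    (ts : ℕ → ℝ) : (ts 0) • e 1 ∈ Cset N e ts := by
  have h1 : (1 : ℕ) < 2*N+2 := by omega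
  refine ⟨?_, ?_, fun k hk1 hkN => ?_⟩
  · rw [real_inner_smul_left, inner_ortho he h1 (by omega), if_neg (by omega)]; ring
  · rw [real_inner_smul_left, inner_ortho he h1 h1, if_pos rfl]; ring
  · have e1 : ⟪(ts 0) • e 1, e (2*k)⟫ = 0 := by
      rw [real_inner_smul_left, inner_ortho he h1 (by omega), if_neg (by omega)]; ring
    have e2 : ⟪(ts 0) • e 1, e (2*k+1)⟫ = 0 := by
      rw [real_inner_smul_left, inner_ortho he h1 (by omega), if_neg (by omega)]; ring
    rw [e1, e2]
    exact left_mem_segment ℝ (0 : ℝ × ℝ) _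
  
lemma Cset_prox_mem {N : ℕ} {e : ℕ → E} (he : Orthonormal ℝ (fun i : Fin (2*N+2) => e i))
    {ts : ℕ → ℝ} {μ γ : ℝ} {z p : E}
    (hp : IsProx γ (fun x => (((μ / 2) * ‖x‖ ^ 2 : ℝ) : EReal) + indE (Cset N e ts) x) z p) :
    p ∈ Cset N e ts :=
  mem_of_isProx_g _ (base_mem_Cset he ts) hp

lemma Cset_pair_zero {N : ℕ} {e : ℕ → E} (he : Orthonormal ℝ (fun i : Fin (2*N+2) => e i))
    {ts : ℕ → ℝ} {μ γ : ℝ} (hμ : 0 < μ) (hγ : 0 < γ) {z p : E}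
    (hp : IsProx γ (fun x => (((μ / 2) * ‖x‖ ^ 2 : ℝ) : EReal) + indE (Cset N e ts) x) z p)
    {k : ℕ} (hk1 : 1 ≤ k) (hkN : k ≤ N)
    (hz1 : ⟪z, e (2*k)⟫ = 0) (hz2 : ⟪z, e (2*k+1)⟫ = 0) :
    ⟪p, e (2*k)⟫ = 0 ∧ ⟪p, e (2*k+1)⟫ = 0 := by
  have hpS := Cset_prox_mem he hp
  have ha : 2*k < 2*N+2 := by omega
  have hb : 2*k+1 < 2*N+2 := by omega
  set ca := ⟪p, e (2*k)⟫ with hca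
  set cb := ⟪p, e (2*k+1)⟫ with hcb
  set q := p - ca • e (2*k) - cb • e (2*k+1) with hqdef
  have hqS : q ∈ Cset N e ts := by
    refine ⟨?_, ?_, fun k' hk1' hkN' => ?_⟩
    · rw [hqdef, inner_pert_eq he ha hb (by omega), if_neg (by omega), if_neg (by omega)]
      simpa using hpS.1
    · rw [hqdef, inner_pert_eq he ha hb (by omega), if_neg (by omega), if_neg (by omega)]
      simpa using hpS.2.1
    · by_cases hkk : k' = k
      · subst hkk
        rw [hqdef, inner_pert_eq he ha hb (by omega), inner_pert_eq he ha hb (by omega),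
          if_pos rfl, if_neg (by omega), if_neg (by omega), if_pos rfl]
        simp only [sub_zero, sub_self, zero_sub]
        convert left_mem_segment ℝ (0 : ℝ × ℝ) (ts (2*k'-1), ts (2*k')) using 2 <;> simp [hca, hcb]
      · have e1 : ⟪q, e (2*k')⟫ = ⟪p, e (2*k')⟫ := by
          rw [hqdef, inner_pert_eq he ha hb (by omega), if_neg (by omega), if_neg (by omega)]
          ring
        have e2 : ⟪q, e (2*k'+1)⟫ = ⟪p, e (2*k'+1)⟫ := by
          rw [hqdef, inner_pert_eq he ha hb (by omega), if_neg (by omega), if_neg (by omega)]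
          ring
        rw [e1, e2]
        exact hpS.2.2 k' hk1' hkN'
  have hineq := real_ineq_of_isProx_g q hqS hpS hp
  have hca' : ca = ⟪p - z, e (2*k)⟫ := by rw [inner_sub_left, hz1, sub_zero]
  have hcb' : cb = ⟪p - z, e (2*k+1)⟫ := by rw [inner_sub_left, hz2, sub_zero]
  have hqz : q - z = (p - z) - ⟪p - z, e (2*k)⟫ • e (2*k)
      - ⟪p - z, e (2*k+1)⟫ • e (2*k+1) := by
    rw [hqdef, ← hca', ← hcb']; abel
  have huv : ⟪e (2*k), e (2*k+1)⟫ = 0 := by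
    rw [inner_ortho he ha hb, if_neg (by omega)]
  have hnu : ‖e (2*k)‖ = 1 := he.1 ⟨2*k, ha⟩
  have hnv : ‖e (2*k+1)‖ = 1 := he.1 ⟨2*k+1, hb⟩
  have hnormz : ‖q - z‖ ^ 2 = ‖p - z‖ ^ 2 - ca ^ 2 - cb ^ 2 := by
    rw [hqz, norm_pert2 huv hnu hnv, ← hca', ← hcb']
  have hnormq : ‖q‖ ^ 2 = ‖p‖ ^ 2 - ca ^ 2 - cb ^ 2 := by
    rw [hqdef, hca, hcb, norm_pert2 huv hnu hnv]
  have hcpos : 0 < 1 / (2 * γ) := by positivity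
  rw [hnormz, hnormq] at hineq
  have h3 : ca ^ 2 + cb ^ 2 ≤ 0 := by nlinarith
  have h4 : ca ^ 2 = 0 := le_antisymm (by nlinarith [sq_nonneg cb]) (sq_nonneg ca)
  have h5 : cb ^ 2 = 0 := le_antisymm (by nlinarith [sq_nonneg ca]) (sq_nonneg cb)
  exact ⟨pow_eq_zero_iff two_ne_zero |>.mp h4, pow_eq_zero_iff two_ne_zero |>.mp h5⟩


lemma span_of_coords {n : ℕ} (hn : 0 < n) {e : ℕ → E}
    (he : Orthonormal ℝ (fun i : Fin n => e i))
    (hcard : Fintype.card (Fin n) = Module.finrank ℝ E)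
    (W : Submodule ℝ E) (v : E)
    (h : ∀ j : Fin n, ⟪e (j : ℕ), v⟫ ≠ 0 → e (j : ℕ) ∈ W) : v ∈ W := by
  have : Nonempty (Fin n) := ⟨⟨0, hn⟩⟩
  let b0 := basisOfLinearIndependentOfCardEqFinrank he.linearIndependent hcard
  have hb0 : ⇑b0 = fun i : Fin n => e (i : ℕ) :=
    coe_basisOfLinearIndependentOfCardEqFinrank _ _
  let b : OrthonormalBasis (Fin n) ℝ E := b0.toOrthonormalBasis (by rwa [hb0])
  have hb : ⇑b = fun i : Fin n => e (i : ℕ) := by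
    rw [Module.Basis.coe_toOrthonormalBasis, hb0]
  have hv : v = ∑ j : Fin n, ⟪b j, v⟫ • b j := (b.sum_repr' v).symm
  rw [hv]
  refine Submodule.sum_mem _ fun j _ => ?_
  rw [show b j = e (j : ℕ) from by rw [hb]]
  by_cases hz : ⟪e (j : ℕ), v⟫ = 0
  · simp [hz]
  · exact Submodule.smul_mem _ _ (h j hz)

end AuxLemmas

/-- zero-respecting trajectories satisfy the proximal span
condition for the worst-case pair with `x₀ = u₀ = 0`.  Supports are taken with
respect to the orthonormal basis `e` (where `e 0` plays the paper's `e₋₁` and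
`e (j+1)` the paper's `e_j`): `supp v = {j < 2N+2 | ⟪v, e j⟫ ≠ 0}`.  The
residuals are `d̃ i = z̃ i - prox_{γᵢ f}(z̃ i)` if `δ i = 0` (i.e. `false`) and
`d̃ i = z̃ i - prox_{γᵢ g}(z̃ i)` if `δ i = 1` (i.e. `true`); here `p i` denotes
the corresponding proximal point, so `d̃ i = z̃ i - p i`. -/
theorem zero_respecting_implies_span (N : ℕ) (μ : ℝ) (hμ : 0 < μ)
    (e : ℕ → EuclideanSpace ℝ (Fin (2 * N + 2)))
    (he : Orthonormal ℝ (fun i : Fin (2 * N + 2) => e i))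
    (ts : ℕ → ℝ)
    (hts0 : ∀ k < N, ts (2 * k)
      = Real.sqrt (μ / ((1 + 2 * (N : ℝ) * μ) * (1 + 2 * (k : ℝ) * μ)
          * (1 + (2 * (k : ℝ) + 1) * μ))))
    (hts1 : ∀ k < N, ts (2 * k + 1)
      = Real.sqrt (μ / ((1 + 2 * (N : ℝ) * μ) * (1 + (2 * (k : ℝ) + 1) * μ)
          * (1 + (2 * (k : ℝ) + 2) * μ))))
    (hts2 : ts (2 * N) = 1 / (1 + 2 * (N : ℝ) * μ))
    (f g : EuclideanSpace ℝ (Fin (2 * N + 2)) → EReal)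
    (hf : f = fun x => indE (Dset N e ts) x)
    (hg : g = fun x => (((μ / 2) * ‖x‖ ^ 2 : ℝ) : EReal) + indE (Cset N e ts) x)
    (z p : ℕ → EuclideanSpace ℝ (Fin (2 * N + 2)))
    (δ : ℕ → Bool) (γ : ℕ → ℝ)
    (xN : EuclideanSpace ℝ (Fin (2 * N + 2)))
    (hγ : ∀ i < 2 * N, 0 < γ i)
    (hprox : ∀ i < 2 * N, if δ i = true then IsProx (γ i) g (z i) (p i)
      else IsProx (γ i) f (z i) (p i))
    (hzr : ∀ i < 2 * N,
      {j | j < 2 * N + 2 ∧ ⟪z i, e j⟫ ≠ 0}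
        ⊆ {j | ∃ k < i, j < 2 * N + 2 ∧ ⟪z k - p k, e j⟫ ≠ 0})
    (hxr : {j | j < 2 * N + 2 ∧ ⟪xN, e j⟫ ≠ 0}
        ⊆ {j | ∃ k < 2 * N, j < 2 * N + 2 ∧ ⟪z k - p k, e j⟫ ≠ 0}) :
    (∀ i < 2 * N,
      z i ∈ Submodule.span ℝ ((fun k => z k - p k) '' {k | k < i})) ∧
    xN ∈ Submodule.span ℝ ((fun k => z k - p k) '' {k | k < 2 * N}) := by
  subst hf hg
  have hcard : Fintype.card (Fin (2*N+2))
      = Module.finrank ℝ (EuclideanSpace ℝ (Fin (2*N+2))) := by simp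
  have key : ∀ i ≤ 2*N, ∃ m : ℕ,
      (∀ k < i, ∀ j, j < 2*N+2 → ⟪z k - p k, e j⟫ ≠ 0 → 1 ≤ j ∧ j ≤ m) ∧
      (∀ j, 1 ≤ j → j ≤ m → j < 2*N+2 →
        e j ∈ Submodule.span ℝ ((fun k => z k - p k) '' {k | k < i})) := by
    intro i
    induction i with
    | zero =>
      exact fun _ => ⟨0, fun k hk => absurd hk (by omega),
        fun j h1 h0 _ => absurd (h1.trans h0) (by omega)⟩
    | succ i ih =>
      intro hi1
      obtain ⟨m, hsupp, hspan⟩ := ih (by omega)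
      have hiN : i < 2*N := by omega
      have hWmono : Submodule.span ℝ ((fun k => z k - p k) '' {k | k < i})
          ≤ Submodule.span ℝ ((fun k => z k - p k) '' {k | k < i+1}) :=
        Submodule.span_mono (Set.image_mono (fun k hk => by
          simp only [Set.mem_setOf_eq] at *; omega))
      have hz : ∀ j, j < 2*N+2 → ⟪z i, e j⟫ ≠ 0 → 1 ≤ j ∧ j ≤ m := by
        intro j hj hne
        obtain ⟨k, hk, hj2, hne2⟩ := hzr i hiN ⟨hj, hne⟩
        exact hsupp k hk j hj2 hne2
      have hd : ∀ j, j < 2*N+2 → ⟪z i - p i, e j⟫ ≠ 0 → 1 ≤ j ∧ j ≤ m + 1 := by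
        intro j hj hne
        have hz0 : ⟪z i, e 0⟫ = 0 := by
          by_contra h; exact absurd (hz 0 (by omega) h).1 (by omega)
        cases hδ : δ i with
        | false =>
          have hP : IsProx (γ i) (fun x => indE (Dset N e ts) x) (z i) (p i) := by
            simpa [hδ] using hprox i hiN
          have hpD : p i ∈ Dset N e ts := Dset_proj_mem hP
          constructor
          · by_contra h0
            have hj0 : j = 0 := by omega
            subst hj0
            rw [inner_sub_left, hz0, hpD.1] at hne
            simp at hne
          · by_contra h0
            have hjm : m + 2 ≤ j := by omega
            by_cases hjN : j = 2*N+1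
            · subst hjN
              have hfree := Dset_free_coord he (hγ i hiN) hP
              rw [inner_sub_left] at hfree hne
              exact hne (by linarith)
            · obtain ⟨k, hkN, hjk⟩ : ∃ k, k < N ∧ (j = 2*k+1 ∨ j = 2*k+2) :=
                ⟨(j-1)/2, by omega, by omega⟩
              have hz1 : ⟪z i, e (2*k+1)⟫ = 0 := by
                by_contra h; have := hz _ (by omega) h; omega
              have hz2 : ⟪z i, e (2*k+2)⟫ = 0 := by
                by_contra h; have := hz _ (by omega) h; omega
              obtain ⟨hp1, hp2⟩ := Dset_pair_zero he (hγ i hiN) hP hkN hz1 hz2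
              rcases hjk with h | h
              · subst h; rw [inner_sub_left, hz1, hp1] at hne; simp at hne
              · subst h; rw [inner_sub_left, hz2, hp2] at hne; simp at hne
        | true =>
          have hP : IsProx (γ i)
              (fun x => (((μ / 2) * ‖x‖ ^ 2 : ℝ) : EReal) + indE (Cset N e ts) x)
              (z i) (p i) := by
            simpa [hδ] using hprox i hiN
          have hpC : p i ∈ Cset N e ts := Cset_prox_mem he hP
          constructor
          · by_contra h0
            have hj0 : j = 0 := by omega
            subst hj0
            rw [inner_sub_left, hz0, hpC.1] at hne
            simp at hne
          · by_contra h0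
            have hjm : m + 2 ≤ j := by omega
            obtain ⟨k, hk1, hkN, hjk⟩ : ∃ k, 1 ≤ k ∧ k ≤ N ∧ (j = 2*k ∨ j = 2*k+1) :=
              ⟨j/2, by omega, by omega, by omega⟩
            have hz1 : ⟪z i, e (2*k)⟫ = 0 := by
              by_contra h; have := hz _ (by omega) h; omega
            have hz2 : ⟪z i, e (2*k+1)⟫ = 0 := by
              by_contra h; have := hz _ (by omega) h; omega
            obtain ⟨hp1, hp2⟩ := Cset_pair_zero he hμ (hγ i hiN) hP hk1 hkN hz1 hz2
            rcases hjk with h | h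
            · subst h; rw [inner_sub_left, hz1, hp1] at hne; simp at hne
            · subst h; rw [inner_sub_left, hz2, hp2] at hne; simp at hne
      by_cases hcc : m+1 < 2*N+2 ∧ ⟪z i - p i, e (m+1)⟫ ≠ 0
      · refine ⟨m+1, ?_, ?_⟩
        · intro k hk j hj hne
          rcases Nat.lt_succ_iff_lt_or_eq.mp hk with h | h
          · have := hsupp k h j hj hne; omega
          · subst h; exact hd j hj hne
        · intro j h1 hm1 hjn
          by_cases hjm : j ≤ m
          · exact hWmono (hspan j h1 hjm hjn)
          · have hj : j = m+1 := by omega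
            subst hj
            set W' := Submodule.span ℝ ((fun k => z k - p k) '' {k | k < i+1}) with hW'
            have hdW : z i - p i ∈ W' :=
              Submodule.subset_span ⟨i, by simp, rfl⟩
            set c := ⟪z i - p i, e (m+1)⟫ with hcdef
            have hv : (z i - p i) - c • e (m+1) ∈ W' := by
              apply span_of_coords (by omega) he hcard
              intro j hne2
              have hinner : ⟪e (j:ℕ), (z i - p i) - c • e (m+1)⟫
                  = ⟪z i - p i, e (j:ℕ)⟫
                    - c * (if (j:ℕ) = m+1 then 1 else 0) := by
                rw [inner_sub_right, real_inner_smul_right,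
                  inner_ortho he j.isLt hcc.1, real_inner_comm]
              rw [hinner] at hne2
              by_cases hjm1 : (j:ℕ) = m+1
              · exfalso
                rw [if_pos hjm1, hjm1, mul_one] at hne2
                exact hne2 (by rw [hcdef]; ring)
              · rw [if_neg hjm1, mul_zero, sub_zero] at hne2
                have hb := hd (j:ℕ) j.isLt hne2
                exact hWmono (hspan (j:ℕ) hb.1 (by omega) j.isLt)
            have hce : c • e (m+1) ∈ W' := by
              have := W'.sub_mem hdW hv
              simpa using this
            have := W'.smul_mem c⁻¹ hce
            rwa [smul_smul, inv_mul_cancel₀ hcc.2, one_smul] at this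
      · push_neg at hcc
        refine ⟨m, ?_, fun j h1 hm hjn => hWmono (hspan j h1 hm hjn)⟩
        intro k hk j hj hne
        rcases Nat.lt_succ_iff_lt_or_eq.mp hk with h | h
        · exact hsupp k h j hj hne
        · subst h
          have hb := hd j hj hne
          refine ⟨hb.1, ?_⟩
          by_contra h0
          have hj1 : j = m+1 := by omega
          subst hj1
          exact hne (hcc hj)
  constructor
  · intro i hi
    obtain ⟨m, hsupp, hspan⟩ := key i (le_of_lt hi)
    apply span_of_coords (by omega) he hcard
    intro j hne
    rw [real_inner_comm] at hne
    obtain ⟨k, hk, hj2, hne2⟩ := hzr i hi ⟨j.isLt, hne⟩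
    have hb := hsupp k hk (j:ℕ) hj2 hne2
    exact hspan (j:ℕ) hb.1 hb.2 j.isLt
  · obtain ⟨m, hsupp, hspan⟩ := key (2*N) le_rfl
    apply span_of_coords (by omega) he hcard
    intro j hne
    rw [real_inner_comm] at hne
    obtain ⟨k, hk, hj2, hne2⟩ := hxr ⟨j.isLt, hne⟩
    have hb := hsupp k hk (j:ℕ) hj2 hne2
    exact hspan (j:ℕ) hb.1 hb.2 j.isLt
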